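/- For every finite y ∈ (0,∞)^d and every S ⊂ {1,…,d}, the stiff limit solution coincides with the Galerkin projection of u(y) onto V_S: u_S(y_{S^c}) = P^y_{V_S} u(y), where P^y_{V_S} is the orthogonal projection onto V_S with respect to the energy inner product ⟨v,w⟩_y := Σ_j y_j ∫_{Ω_j} ∇v·∇w dx; equivalently, u_S(y_{S^c}) is also the orthogonal projection of u(y) onto V_S for the inner product ⟨v,w⟩_{y_{S^c}} := Σ_{j∈S^c} y_j ∫_{Ω_j} ∇v·∇w dx. -/

import Mathlib

open scoped BigOperators ENNReal InnerProductSpace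
open Filter

noncomputable section

variable {V : Type*} [NormedAddCommGroup V] [InnerProductSpace ℝ V] [CompleteSpace V]

/-- The closed subspace `V_S` of functions whose gradient vanishes on `Ω_j` for all `j ∈ S`,
encoded through the local Dirichlet forms `B j v w = ∫_{Ω_j} ∇v·∇w`. -/
def VS {d : ℕ} (B : Fin d → V →L[ℝ] V →L[ℝ] ℝ) (S : Set (Fin d)) : Submodule ℝ V where
  carrier := {v | ∀ j ∈ S, B j v = 0}
  add_mem' := by
    intro a b ha hb j hj
    simp only [Set.mem_setOf_eq] at *
    simp [map_add, ha j hj, hb j hj]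
  zero_mem' := by intro j hj; simp
  smul_mem' := by
    intro c a ha j hj
    simp only [Set.mem_setOf_eq] at *
    simp [map_smul, ha j hj]

/-- The parametric energy bilinear form `a_y(v,w) = Σ_j y_j ∫_{Ω_j} ∇v·∇w`. -/
def aForm {d : ℕ} (B : Fin d → V →L[ℝ] V →L[ℝ] ℝ) (y : Fin d → ℝ) (v w : V) : ℝ :=
  ∑ j, y j * B j v w

/-- The parametric energy norm `‖v‖_y`. -/
def eNorm {d : ℕ} (B : Fin d → V →L[ℝ] V →L[ℝ] ℝ) (y : Fin d → ℝ) (v : V) : ℝ :=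
  Real.sqrt (aForm B y v v)

/-- `u` is the weak solution of the diffusion problem with (finite) parameter `y`. -/
def IsWeakSol {d : ℕ} (B : Fin d → V →L[ℝ] V →L[ℝ] ℝ) (f : V →L[ℝ] ℝ)
    (y : Fin d → ℝ) (u : V) : Prop :=
  ∀ v : V, aForm B y u v = f v

/-- `u` is the (possibly stiff-limit) solution for an extended parameter `y ∈ (0,∞]^d`:
on the set `S = {j | y j = ∞}` of infinite entries, `u ∈ V_S` and `u` solves the
limit variational problem over `V_S`. -/
def IsSolE {d : ℕ} (B : Fin d → V →L[ℝ] V →L[ℝ] ℝ) (f : V →L[ℝ] ℝ)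
    (y : Fin d → ℝ≥0∞) (u : V) : Prop :=
  u ∈ VS B {j | y j = ∞} ∧
  ∀ v ∈ VS B {j | y j = ∞}, ∑ j, (y j).toReal * B j u v = f v

/-- `p` is the `H^1_0`-orthogonal projection of `u` onto `K`. -/
def IsOrthProj (K : Submodule ℝ V) (u p : V) : Prop :=
  p ∈ K ∧ ∀ w ∈ K, ⟪u - p, w⟫_ℝ = 0

/-- `p` is the Galerkin projection of `u` onto `K` for the energy inner product `⟨·,·⟩_y`. -/
def IsGalProj {d : ℕ} (B : Fin d → V →L[ℝ] V →L[ℝ] ℝ) (y : Fin d → ℝ)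
    (K : Submodule ℝ V) (u p : V) : Prop :=
  p ∈ K ∧ ∀ w ∈ K, aForm B y (u - p) w = 0

/-- Galerkin projection for an extended parameter `y ∈ (0,∞]^d` (the energy inner
product being restricted to the finite components of `y`). -/
def IsGalProjE {d : ℕ} (B : Fin d → V →L[ℝ] V →L[ℝ] ℝ) (y : Fin d → ℝ≥0∞)
    (K : Submodule ℝ V) (u p : V) : Prop :=
  p ∈ K ∧ ∀ w ∈ K, ∑ j, (y j).toReal * B j (u - p) w = 0

/-- The finite set of multi-indices `ν ∈ ℕ^d` of total degree `|ν| ≤ k`. -/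
def mIdx (d k : ℕ) : Finset (Fin d → ℕ) :=
  (Fintype.piFinset fun _ : Fin d => Finset.range (k+1)).filter fun ν => ∑ j, ν j ≤ k

/-- The monomial `y^ν`. -/
def mono {d : ℕ} (y : Fin d → ℝ) (ν : Fin d → ℕ) : ℝ := ∏ j, y j ^ ν j

section GalerkinProjection

variable {E : Type*} [NormedAddCommGroup E] [InnerProductSpace ℝ E]
  {d : ℕ} {B : Fin d → E →L[ℝ] E →L[ℝ] ℝ}

theorem aForm_sub_left (y : Fin d → ℝ) (u v w : E) :
    aForm B y (u - v) w = aForm B y u w - aForm B y v w := by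
  simp only [aForm, map_sub, sub_apply, mul_sub, Finset.sum_sub_distrib]

theorem aForm_eq_sum_compl_of_mem_VS (hsymm : ∀ (j : Fin d) (v w : E), B j v w = B j w v)
    {S : Finset (Fin d)} {w : E} (hw : w ∈ VS B ↑S) (y : Fin d → ℝ) (v : E) :
    aForm B y v w = ∑ j ∈ Sᶜ, y j * B j v w := by
  have hS : ∑ j ∈ S, y j * B j v w = 0 :=
    Finset.sum_eq_zero fun j hj => by rw [hsymm, hw j hj, zero_apply, mul_zero]
  rw [aForm, ← Finset.sum_add_sum_compl S, hS, zero_add]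

end GalerkinProjection

theorem statement17_general
    {V : Type*} [NormedAddCommGroup V] [InnerProductSpace ℝ V] [CompleteSpace V]
    {d : ℕ}
    (B : Fin d → V →L[ℝ] V →L[ℝ] ℝ)
    (hsymm : ∀ (j : Fin d) (v w : V), B j v w = B j w v)
    (f : V →L[ℝ] ℝ)
    (S : Finset (Fin d))
    (y : Fin d → ℝ)
    (u : V) (hu : IsWeakSol B f y u)
    (uS : V) (huS : uS ∈ VS B ↑S)
    (heq : ∀ v ∈ VS B ↑S, ∑ j ∈ Sᶜ, y j * B j uS v = f v) :
    IsGalProj B y (VS B ↑S) u uS ∧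
    ∀ w ∈ VS B ↑S, ∑ j ∈ Sᶜ, y j * B j (u - uS) w = 0 := by
  have hgal : ∀ w ∈ VS B ↑S, aForm B y (u - uS) w = 0 := fun w hw => by
    rw [aForm_sub_left, hu w, aForm_eq_sum_compl_of_mem_VS hsymm hw, heq w hw, sub_self]
  refine ⟨⟨huS, hgal⟩, fun w hw => ?_⟩
  rw [← aForm_eq_sum_compl_of_mem_VS hsymm hw]
  exact hgal w hw

/-- identity (3.14): the stiff limit solution `u_S(y_{S^c})` is the
Galerkin projection of `u(y)` onto `V_S`, both for the `⟨·,·⟩_y` and the `⟨·,·⟩_{y_{S^c}}`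
inner products. -/
theorem statement17
    {V : Type*} [NormedAddCommGroup V] [InnerProductSpace ℝ V] [CompleteSpace V]
    {d : ℕ}
    (B : Fin d → V →L[ℝ] V →L[ℝ] ℝ)
    (hsymm : ∀ (j : Fin d) (v w : V), B j v w = B j w v)
    (hnonneg : ∀ (j : Fin d) (v : V), 0 ≤ B j v v)
    (hsum : ∀ v w : V, ∑ j, B j v w = ⟪v, w⟫_ℝ)
    (f : V →L[ℝ] ℝ)
    (S : Finset (Fin d))
    (y : Fin d → ℝ) (hy : ∀ j, 0 < y j)
    (u : V) (hu : IsWeakSol B f y u)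
    (uS : V) (huS : uS ∈ VS B ↑S)
    (heq : ∀ v ∈ VS B ↑S, ∑ j ∈ Sᶜ, y j * B j uS v = f v) :
    IsGalProj B y (VS B ↑S) u uS ∧
    ∀ w ∈ VS B ↑S, ∑ j ∈ Sᶜ, y j * B j (u - uS) w = 0 :=
  statement17_general B hsymm f S y u hu uS huS heq
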